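/- arXiv:2007.04742 — 3 statements merged into one kernel-verified Lean document; each statement's English description precedes it below -/
import Mathlib

section
/- Let {B_i} be a sequence of balls in ℝ^k with Lebesgue measure tending to 0, and let {U_i} be Lebesgue measurable sets with U_i ⊆ B_i and μ_k(U_i) ≥ c·μ_k(B_i) for some fixed c > 0 and all i. Then limsup_i U_i and limsup_i B_i have the same k-dimensional Lebesgue measure. -/
/-!
If a part `W` of `limsup Bᵢ` of positive measure avoided `⋃_{i ≥ N} Uᵢ`, take a Lebesgue density
point `d` of `W`. Infinitely many `Bᵢ` contain `d`, and their radii tend to `0` because their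
measures do. But each of these balls gives a proportion at least `c` of its measure to `Uᵢ`, which
is disjoint from `W`, so the density of `W` in it stays below `1 - c < 1`.
-/

open MeasureTheory Metric Set Filter
open scoped ENNReal Topology

namespace MeasureTheory.Measure

variable {E : Type*} [NormedAddCommGroup E] [MeasurableSpace E] [BorelSpace E]
  (μ : Measure E) [μ.IsAddHaarMeasure]

theorem tendsto_nhdsGT_zero_of_tendsto_measure_ball {ι : Type*} {l : Filter ι} {x : ι → E}
    {r : ι → ℝ} (hr : ∀ᶠ j in l, 0 < r j)
    (h : Tendsto (fun j => μ (ball (x j) (r j))) l (𝓝 0)) : Tendsto r l (𝓝[>] 0) := by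
  refine tendsto_nhdsWithin_iff.2 ⟨tendsto_order.2 ⟨fun a ha => hr.mono fun j hj => ha.trans hj,
    fun ε hε => ?_⟩, hr⟩
  filter_upwards [h.eventually_lt_const (measure_ball_pos μ (0 : E) hε)] with j hj
  by_contra! hle
  refine hj.not_ge ?_
  rw [← addHaar_ball_center μ (x j)]
  exact measure_mono (ball_subset_ball hle)

variable [NormedSpace ℝ E] [FiniteDimensional ℝ E]

theorem addHaar_closedBall_eq_addHaar_ball_of_pos (x : E) {r : ℝ} (hr : 0 < r) :
    μ (closedBall x r) = μ (ball x r) := by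
  rcases subsingleton_or_nontrivial E with hE | hE
  · have hx : ∀ y : E, y ∈ ball x r := fun y => by simpa [Subsingleton.elim y x] using hr
    rw [eq_univ_of_forall hx, eq_univ_of_forall fun y => ball_subset_closedBall (hx y)]
  · exact addHaar_closedBall_eq_addHaar_ball μ x r

theorem measure_inter_closedBall_div_le {U W : Set E} {x : E} {r : ℝ} {c : ℝ≥0∞} (hr : 0 < r)
    (hU : MeasurableSet U) (hUB : U ⊆ ball x r) (hcU : c * μ (ball x r) ≤ μ U)
    (hUW : Disjoint U W) :
    μ (W ∩ closedBall x r) / μ (closedBall x r) ≤ 1 - c := by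
  rw [addHaar_closedBall_eq_addHaar_ball_of_pos μ x hr]
  have hfin : μ (ball x r) ≠ ∞ := measure_ball_lt_top.ne
  have hsum : c * μ (ball x r) + μ (W ∩ closedBall x r) ≤ μ (ball x r) :=
    calc c * μ (ball x r) + μ (W ∩ closedBall x r) ≤ μ U + μ (W ∩ closedBall x r) := by gcongr
      _ = μ (U ∪ (W ∩ closedBall x r)) :=
        (measure_union' (hUW.mono_right inter_subset_left) hU).symm
      _ ≤ μ (closedBall x r) :=
        measure_mono (union_subset (hUB.trans ball_subset_closedBall) inter_subset_right)
      _ = μ (ball x r) := addHaar_closedBall_eq_addHaar_ball_of_pos μ x hr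
  refine ENNReal.div_le_of_le_mul ?_
  rw [ENNReal.sub_mul fun _ _ => hfin, one_mul]
  exact ENNReal.le_sub_of_add_le_left
    (hcU.trans_lt ((measure_mono hUB).trans_lt measure_ball_lt_top)).ne hsum

theorem measure_limsup_ball_diff_iUnion_eq_zero {x : ℕ → E} {r : ℕ → ℝ} {U : ℕ → Set E}
    {c : ℝ≥0∞} (hc : c ≠ 0) (htend : Tendsto (fun i => μ (ball (x i) (r i))) atTop (𝓝 0))
    (hU : ∀ i, MeasurableSet (U i)) (hUB : ∀ i, U i ⊆ ball (x i) (r i))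
    (hcU : ∀ i, c * μ (ball (x i) (r i)) ≤ μ (U i)) (N : ℕ) :
    μ (limsup (fun i => ball (x i) (r i)) atTop \ ⋃ i ≥ N, U i) = 0 := by
  set W := limsup (fun i => ball (x i) (r i)) atTop \ ⋃ i ≥ N, U i
  by_contra hW
  obtain ⟨d, hdW, hd⟩ := exists_mem_of_measure_ne_zero_of_ae hW
    (IsUnifLocDoublingMeasure.ae_tendsto_measure_inter_div μ W 1)
  set l := atTop ⊓ 𝓟 {i | d ∈ ball (x i) (r i)}
  have : l.NeBot := frequently_mem_iff_neBot.1 (mem_limsup_iff_frequently_mem.1 hdW.1)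
  have hdl : ∀ᶠ i in l, d ∈ ball (x i) (r i) := mem_inf_of_right (mem_principal_self _)
  have hrl : Tendsto r l (𝓝[>] 0) :=
    tendsto_nhdsGT_zero_of_tendsto_measure_ball μ (hdl.mono fun _ => pos_of_mem_ball)
      (htend.mono_left inf_le_left)
  have hdensity := hd x r hrl (hdl.mono fun i hi => by simpa using ball_subset_closedBall hi)
  have hratio :
      ∀ᶠ i in l, μ (W ∩ closedBall (x i) (r i)) / μ (closedBall (x i) (r i)) ≤ 1 - c := by
    filter_upwards [hdl, (eventually_ge_atTop N).filter_mono inf_le_left] with i hi hNi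
    refine measure_inter_closedBall_div_le μ (pos_of_mem_ball hi) (hU i) (hUB i) (hcU i) ?_
    exact disjoint_sdiff_right.mono_left (subset_biUnion_of_mem (u := U) hNi)
  exact (ENNReal.sub_lt_self ENNReal.one_ne_top one_ne_zero hc).not_ge
    (le_of_tendsto hdensity hratio)

theorem measure_limsup_eq_measure_limsup_ball {x : ℕ → E} {r : ℕ → ℝ} {U : ℕ → Set E}
    {c : ℝ≥0∞} (hc : c ≠ 0) (htend : Tendsto (fun i => μ (ball (x i) (r i))) atTop (𝓝 0))
    (hU : ∀ i, MeasurableSet (U i)) (hUB : ∀ i, U i ⊆ ball (x i) (r i))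
    (hcU : ∀ i, c * μ (ball (x i) (r i)) ≤ μ (U i)) :
    μ (limsup U atTop) = μ (limsup (fun i => ball (x i) (r i)) atTop) := by
  refine le_antisymm (measure_mono (limsup_le_limsup (.of_forall hUB))) (measure_mono_ae ?_)
  rw [ae_le_set, limsup_eq_iInf_iSup_of_nat (u := U), iInf_eq_iInter, sdiff_iInter]
  refine measure_iUnion_null fun N => ?_
  simpa only [iSup_eq_iUnion] using
    measure_limsup_ball_diff_iUnion_eq_zero μ hc htend hU hUB hcU N

end MeasureTheory.Measure

/-- Beresnevich–Velani lemma: if `Uᵢ ⊆ Bᵢ` are measurable with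
`μ(Uᵢ) ≥ c·μ(Bᵢ)` and `μ(Bᵢ) → 0`, then `limsup Uᵢ` and `limsup Bᵢ` have the
same Lebesgue measure. -/
theorem stmt4 (k : ℕ) (c : ℝ) (hc : 0 < c) (x : ℕ → Fin k → ℝ) (r : ℕ → ℝ)
    (U : ℕ → Set (Fin k → ℝ))
    (htend : Filter.Tendsto (fun i => volume (ball (x i) (r i))) Filter.atTop (nhds 0))
    (hUmeas : ∀ i, MeasurableSet (U i))
    (hsub : ∀ i, U i ⊆ ball (x i) (r i))
    (hmeas : ∀ i, ENNReal.ofReal c * volume (ball (x i) (r i)) ≤ volume (U i)) :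
    volume (⋂ N : ℕ, ⋃ i : ℕ, ⋃ _ : N ≤ i, U i) =
      volume (⋂ N : ℕ, ⋃ i : ℕ, ⋃ _ : N ≤ i, ball (x i) (r i)) := by
  have h := volume.measure_limsup_eq_measure_limsup_ball (ENNReal.ofReal_pos.2 hc).ne' htend
    hUmeas hsub hmeas
  simpa only [limsup_eq_iInf_iSup_of_nat, iInf_eq_iInter, iSup_eq_iUnion] using h
end

section
/- Let U ⊆ ℝ^d be open, f : U → ℝ^m twice continuously differentiable with bounded first and second partial derivatives on U, τ = (τ_1,…,τ_m) ∈ ℝ_{>0}^m with Σ_{i=1}^m τ_i < 1, and set τ̃ = (1/m)Στ_i. Then for every x ∈ U there exists Q_0 ∈ ℕ such that for all Q ≥ Q_0 there is (p_1,…,p_n,q) ∈ ℤ^n × ℕ (n = d + m) with 1 ≤ q ≤ Q, (p_1/q,…,p_d/q) ∈ U, |x_i - p_i/q| < 4^{m/d} / (q Q^{(1-τ̃m)/d}) for 1 ≤ i ≤ d, and |f_j(p_1/q,…,p_d/q) - p_{d+j}/q| < q^{-τ_j - 1}/2 for 1 ≤ j ≤ m. -/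
/-!
Fix `x` and a large `Q`, and let `δ = 4^{m/d} Q^{-(1-∑τ)/d}`. The integer linear forms
`t`, `t xᵢ - pᵢ` and `t fⱼ(x) + ∑ᵢ ∂ᵢfⱼ(x) (pᵢ - t xᵢ) - p'ⱼ` in `(t, p, p')` have a unimodular
matrix, and the box `|t| < Q + 1`, `|t xᵢ - pᵢ| < δ`, `|…| < Q^{-τⱼ}/4` has volume
`2^{1+d+m} (Q + 1)/Q`, so Minkowski's theorem gives a nonzero integer solution. As the box is
thin, `t ≠ 0`, and after a change of sign `t = q ≥ 1`. Then `p/q` is within `δ/q` of `x`, and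
`(p/q, p'/q)` is within `Q^{-τⱼ}/(4q)` of the tangent plane of the graph of `f` at `x`. By
Taylor's formula the graph leaves its tangent plane at `p/q` by at most `d² C δ²/q²`, which is
below `1/(4q²) ≤ q^{-τⱼ-1}/4` once `Q` is large.
-/

open Filter Finset Matrix MeasureTheory Topology

theorem Matrix.exists_ne_zero_int_abs_mulVec_lt {ι : Type*} [Fintype ι] [DecidableEq ι]
    (M : Matrix ι ι ℝ) (hM : M.det ≠ 0) (b : ι → ℝ) (hb : ∀ i, 0 ≤ b i)
    (hvol : |M.det| < ∏ i, b i) :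
    ∃ c : ι → ℤ, c ≠ 0 ∧ ∀ i, |(M *ᵥ fun k => (c k : ℝ)) i| < b i := by
  set s : Set (ι → ℝ) := M.toLin' ⁻¹' Set.univ.pi fun i => Set.Ioo (-b i) (b i) with hs
  have hsymm : ∀ v ∈ s, -v ∈ s := by
    intro v hv i _
    have := hv i trivial
    simp only [Set.mem_Ioo, map_neg, Pi.neg_apply] at this ⊢
    constructor <;> linarith [this.1, this.2]
  have hconv : Convex ℝ s := (convex_pi fun i _ => convex_Ioo _ _).linear_preimage _
  have hvol_s : volume (ZSpan.fundamentalDomain (Pi.basisFun ℝ ι)) * 2 ^ Module.finrank ℝ (ι → ℝ)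
      < volume s := by
    have hprod : (2 : ℝ) ^ Fintype.card ι < |M.det|⁻¹ * ∏ i, (b i + b i) := by
      simp_rw [← two_mul, Finset.prod_mul_distrib, Finset.prod_const, Finset.card_univ,
        mul_left_comm _ ((2 : ℝ) ^ _)]
      refine lt_mul_of_one_lt_right (by positivity) ?_
      rwa [one_lt_inv_mul₀ (abs_pos.mpr hM)]
    rw [ZSpan.fundamentalDomain_pi_basisFun, hs,
      Measure.addHaar_preimage_linearMap _ (by rwa [LinearMap.det_toLin']),
      LinearMap.det_toLin', volume_pi_pi, volume_pi_pi]
    simp only [Real.volume_Ioo, Real.volume_Ico, Module.finrank_fintype_fun_eq_card, sub_zero,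
      sub_neg_eq_add, ENNReal.ofReal_one, Finset.prod_const_one, one_mul, abs_inv]
    rw [← ENNReal.ofReal_prod_of_nonneg fun i _ => by linarith [hb i],
      ← ENNReal.ofReal_mul (by positivity), ← ENNReal.ofReal_ofNat 2,
      ← ENNReal.ofReal_pow zero_le_two]
    exact (ENNReal.ofReal_lt_ofReal_iff_of_nonneg (by positivity)).mpr hprod
  have : Countable (Submodule.span ℤ (Set.range (Pi.basisFun ℝ ι))).toAddSubgroup :=
    inferInstanceAs (Countable (Submodule.span ℤ (Set.range (Pi.basisFun ℝ ι))))
  obtain ⟨⟨v, hv⟩, hv0, hvs⟩ := exists_ne_zero_mem_lattice_of_measure_mul_two_pow_lt_measure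
    (ZSpan.isAddFundamentalDomain' (Pi.basisFun ℝ ι) volume) hsymm hconv hvol_s
  obtain ⟨c, rfl⟩ := (Submodule.mem_span_range_iff_exists_fun ℤ).mp hv
  have hc : (∑ i, c i • Pi.basisFun ℝ ι i) = fun k => (c k : ℝ) := by
    ext k; simp [Pi.single_apply]
  refine ⟨c, ?_, fun i => abs_lt.mpr ?_⟩
  · rintro rfl
    simp at hv0
  · have := hvs i trivial
    simp only [hc, toLin'_apply, Set.mem_Ioo] at this
    exact this

theorem exists_int_approx_linearForms {ι κ : Type*} [Fintype ι] [Fintype κ]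
    (x : ι → ℝ) (F : κ → ℝ) (g : κ → ι → ℝ) (T : ℝ) (u : ι → ℝ) (w : κ → ℝ)
    (hu : ∀ i, 0 ≤ u i) (hw : ∀ j, 0 ≤ w j) (hvol : 1 < T * (∏ i, u i) * ∏ j, w j) :
    ∃ (t : ℤ) (p : ι → ℤ) (p' : κ → ℤ), (t, p, p') ≠ 0 ∧ |(t : ℝ)| < T ∧
      (∀ i, |t * x i - p i| < u i) ∧
      ∀ j, |t * F j + ∑ i, g j i * (p i - t * x i) - p' j| < w j := by
  classical
  have hT : 0 ≤ T := by
    by_contra! hT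
    have := mul_nonpos_of_nonpos_of_nonneg (mul_nonpos_of_nonpos_of_nonneg hT.le
      (Finset.prod_nonneg fun i (_ : i ∈ Finset.univ) => hu i))
      (Finset.prod_nonneg fun j (_ : j ∈ Finset.univ) => hw j)
    linarith
  -- Coordinates `((t, p), p')`; the rows of `M` are the forms to be bounded, and `M` is block
  -- lower triangular with diagonal blocks `1`, `-1`, `-1`.
  let M : Matrix ((Unit ⊕ ι) ⊕ κ) ((Unit ⊕ ι) ⊕ κ) ℝ :=
    fromBlocks (fromBlocks 1 0 (replicateCol Unit x) (-1)) 0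
      (of fun j => Sum.elim (fun _ => F j - ∑ i, g j i * x i) (g j)) (-1)
  have hdet : |M.det| = 1 := by
    simp only [M, det_fromBlocks_zero₁₂, det_neg, det_one]
    simp
  obtain ⟨c, hc0, hc⟩ := M.exists_ne_zero_int_abs_mulVec_lt (by simp [← abs_pos, hdet])
    (Sum.elim (Sum.elim (fun _ => T) u) w) (by rintro ((_ | i) | j) <;> simp [*])
    (by simpa [hdet, Fintype.prod_sum_type, mul_assoc] using hvol)
  refine ⟨c (.inl (.inl ())), fun i => c (.inl (.inr i)), fun j => c (.inr j), ?_, ?_, ?_, ?_⟩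
  · contrapose! hc0
    simp only [Prod.ext_iff, funext_iff, Prod.fst_zero, Prod.snd_zero, Pi.zero_apply] at hc0
    ext ((_ | i) | j)
    exacts [hc0.1, hc0.2.1 i, hc0.2.2 j]
  · simpa [M, fromBlocks_mulVec] using hc (.inl (.inl ()))
  · intro i
    refine lt_of_eq_of_lt (congrArg abs ?_) (hc (.inl (.inr i)))
    simp [M, mulVec, dotProduct, one_apply]
    ring
  · intro j
    refine lt_of_eq_of_lt (congrArg abs ?_) (hc (.inr j))
    simp [M, mulVec, dotProduct, one_apply, mul_sub, Finset.sum_sub_distrib]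
    rw [Finset.sum_congr rfl fun i _ => mul_left_comm (g j i) _ (x i), ← Finset.mul_sum]
    ring

theorem exists_pos_nat_approx_linearForms {ι κ : Type*} [Fintype ι] [Fintype κ]
    (x : ι → ℝ) (F : κ → ℝ) (g : κ → ι → ℝ) (T : ℝ) (u : ι → ℝ) (w : κ → ℝ)
    (hu : ∀ i, u i ∈ Set.Icc (0 : ℝ) 1) (hw : ∀ j, w j ∈ Set.Icc (0 : ℝ) 1)
    (hvol : 1 < T * (∏ i, u i) * ∏ j, w j) :
    ∃ (q : ℕ) (p : ι → ℤ) (p' : κ → ℤ), 0 < q ∧ (q : ℝ) < T ∧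
      (∀ i, |q * x i - p i| < u i) ∧
      ∀ j, |q * F j + ∑ i, g j i * (p i - q * x i) - p' j| < w j := by
  obtain ⟨t, p, p', hne, hT, hp, hp'⟩ := exists_int_approx_linearForms x F g T u w
    (fun i => (hu i).1) (fun j => (hw j).1) hvol
  have ht : t ≠ 0 := by
    rintro rfl
    have hp0 : p = 0 := funext fun i => Int.abs_lt_one_iff.mp <| by
      have := (hp i).trans_le (hu i).2
      rw [Int.cast_zero, zero_mul, zero_sub, abs_neg] at this
      exact_mod_cast this
    subst hp0
    refine hne (Prod.ext rfl (Prod.ext rfl (funext fun j => Int.abs_lt_one_iff.mp ?_)))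
    have := (hp' j).trans_le (hw j).2
    simp only [Int.cast_zero, zero_mul, Pi.zero_apply, sub_zero, mul_zero, Finset.sum_const_zero,
      zero_add, zero_sub, abs_neg] at this
    exact_mod_cast this
  have hs : |(t.sign : ℝ)| = 1 := by exact_mod_cast Int.abs_sign_of_ne_zero ht
  have hq : ((t.natAbs : ℕ) : ℝ) = t.sign * t := by
    rw [Nat.cast_natAbs, ← Int.cast_mul, Int.sign_mul_self_eq_abs, Int.cast_abs]
  refine ⟨t.natAbs, fun i => t.sign * p i, fun j => t.sign * p' j, Int.natAbs_pos.mpr ht, ?_,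
    fun i => ?_, fun j => ?_⟩
  · rwa [Nat.cast_natAbs, Int.cast_abs]
  · rw [hq, Int.cast_mul, show (t.sign * t * x i - t.sign * p i : ℝ) = t.sign * (t * x i - p i) by
      ring, abs_mul, hs, one_mul]
    exact hp i
  · have hsum : ∀ i, g j i * ((t.sign * p i : ℤ) - t.sign * t * x i : ℝ)
        = t.sign * (g j i * (p i - t * x i)) := fun i => by push_cast; ring
    rw [hq, Finset.sum_congr rfl fun i _ => hsum i, ← Finset.mul_sum, Int.cast_mul,
      show (t.sign * t * F j + t.sign * ∑ i, g j i * (p i - t * x i) - t.sign * p' j : ℝ)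
        = t.sign * (t * F j + ∑ i, g j i * (p i - t * x i) - p' j) by ring, abs_mul, hs, one_mul]
    exact hp' j

theorem ContinuousLinearMap.apply_eq_sum_smul_apply_single {ι R M : Type*} [Fintype ι]
    [DecidableEq ι] [Semiring R] [TopologicalSpace R] [AddCommMonoid M] [Module R M]
    [TopologicalSpace M] (L : (ι → R) →L[R] M) (v : ι → R) :
    L v = ∑ i, v i • L (Pi.single i 1) := by
  conv_lhs => rw [pi_eq_sum_univ' v]
  simp only [map_sum, map_smul]

theorem ContinuousLinearMap.opNorm_le_card_mul {ι F : Type*} [Fintype ι] [DecidableEq ι]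
    [NormedAddCommGroup F] [NormedSpace ℝ F] (L : (ι → ℝ) →L[ℝ] F) {c : ℝ}
    (hc : ∀ i, ‖L (Pi.single i 1)‖ ≤ c) : ‖L‖ ≤ Fintype.card ι * c := by
  rcases isEmpty_or_nonempty ι with hι | ⟨⟨i₀⟩⟩
  · simp [Subsingleton.elim L 0]
  have hc0 : 0 ≤ c := (norm_nonneg _).trans (hc i₀)
  refine L.opNorm_le_bound (by positivity) fun v => ?_
  calc ‖L v‖ ≤ ∑ i, ‖v i • L (Pi.single i 1)‖ := by
        rw [L.apply_eq_sum_smul_apply_single]; exact norm_sum_le _ _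
    _ ≤ ∑ _i : ι, ‖v‖ * c := by
        gcongr with i; rw [norm_smul]; gcongr; exacts [norm_le_pi_norm v i, hc i]
    _ = Fintype.card ι * c * ‖v‖ := by simp; ring

theorem IsOpen.fderivWithin_fderivWithin_apply {𝕜 E F : Type*} [NontriviallyNormedField 𝕜]
    [NormedAddCommGroup E] [NormedSpace 𝕜 E] [NormedAddCommGroup F] [NormedSpace 𝕜 F]
    {U : Set E} (hU : IsOpen U) (φ : E → F) (v : E) {z : E} (hz : z ∈ U) :
    fderivWithin 𝕜 (fun y => fderivWithin 𝕜 φ U y v) U z =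
      fderiv 𝕜 (fun y => fderiv 𝕜 φ y v) z := by
  rw [fderivWithin_of_isOpen hU hz]
  refine Filter.EventuallyEq.fderiv_eq ?_
  filter_upwards [hU.mem_nhds hz] with y hy
  rw [fderivWithin_of_isOpen hU hy]

theorem Convex.abs_sub_sub_fderiv_le {ι : Type*} [Fintype ι] [DecidableEq ι]
    {U s : Set (ι → ℝ)} (hU : IsOpen U) {φ : (ι → ℝ) → ℝ} (hφ : ContDiffOn ℝ 2 φ U)
    (hs : Convex ℝ s) (hsU : s ⊆ U) {C : ℝ}
    (hC : ∀ z ∈ s, ∀ i k,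
      |fderiv ℝ (fun w => fderiv ℝ φ w (Pi.single i 1)) z (Pi.single k 1)| ≤ C)
    {x y : ι → ℝ} (hx : x ∈ s) (hy : y ∈ s) :
    |φ y - φ x - fderiv ℝ φ x (y - x)| ≤ Fintype.card ι ^ 2 * C * ‖y - x‖ ^ 2 := by
  rcases isEmpty_or_nonempty ι with hι | ⟨⟨i₀⟩⟩
  · simp [Subsingleton.elim y x]
  have hC0 : 0 ≤ C := (abs_nonneg _).trans (hC x hx i₀ i₀)
  have hdiff : ∀ z ∈ U, DifferentiableAt ℝ φ z := fun z hz =>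
    (hφ.contDiffAt (hU.mem_nhds hz)).differentiableAt (by norm_num)
  have hdiff' : ∀ i, ∀ z ∈ U, DifferentiableAt ℝ (fun w => fderiv ℝ φ w (Pi.single i 1)) z :=
    fun i z hz => (((hφ.fderiv_of_isOpen hU (m := 1) (by norm_num)).clm_apply
      contDiffOn_const).contDiffAt (hU.mem_nhds hz)).differentiableAt (by norm_num)
  have hpartial : ∀ i, ∀ z ∈ s, ‖fderiv ℝ φ z (Pi.single i 1) - fderiv ℝ φ x (Pi.single i 1)‖
      ≤ Fintype.card ι * C * ‖z - x‖ := fun i z hz =>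
    hs.norm_image_sub_le_of_norm_fderiv_le (fun w hw => hdiff' i w (hsU hw))
      (fun w hw => ContinuousLinearMap.opNorm_le_card_mul _ fun k => hC w hw i k) hx hz
  have hseg : segment ℝ x y ⊆ s := hs.segment_subset hx hy
  have hbound : ∀ z ∈ segment ℝ x y,
      ‖fderiv ℝ φ z - fderiv ℝ φ x‖ ≤ Fintype.card ι ^ 2 * C * ‖y - x‖ := fun z hz => by
    refine (ContinuousLinearMap.opNorm_le_card_mul (c := Fintype.card ι * C * ‖y - x‖) _
      fun i => ?_).trans_eq (by ring)
    refine (hpartial i z (hseg hz)).trans ?_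
    gcongr
    exact norm_sub_le_of_mem_segment hz
  have := (convex_segment x y).norm_image_sub_le_of_norm_fderiv_le'
    (fun z hz => hdiff z (hsU (hseg hz))) hbound (left_mem_segment ℝ x y) (right_mem_segment ℝ x y)
  rw [Real.norm_eq_abs] at this
  linarith

theorem abs_sub_div_lt_div {x δ : ℝ} {q : ℕ} {p : ℤ} (hq : 0 < q) (h : |q * x - p| < δ) :
    |x - p / q| < δ / q := by
  have hq' : (0 : ℝ) < q := by exact_mod_cast hq
  rwa [show x - p / q = (q * x - p) / q by field_simp, abs_div, abs_of_pos hq',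
    div_lt_div_iff_of_pos_right hq']

theorem abs_add_div_lt_rpow {R L q Q τ : ℝ} (hq : 1 ≤ q) (hqQ : q ≤ Q) (hτ0 : 0 ≤ τ)
    (hτ1 : τ ≤ 1) (hR : |R| ≤ 1 / (4 * q ^ 2)) (hL : |L| < Q ^ (-τ) / 4) :
    |R + L / q| < q ^ (-τ - 1) / 2 := by
  have hq0 : 0 < q := one_pos.trans_le hq
  have hR' : 1 / (4 * q ^ 2) ≤ q ^ (-τ - 1) / 4 := by
    have : q ^ (-2 : ℝ) ≤ q ^ (-τ - 1) := Real.rpow_le_rpow_of_exponent_le hq (by linarith)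
    rw [Real.rpow_neg hq0.le, Real.rpow_two] at this
    rw [one_div, mul_inv, ← div_eq_inv_mul]
    linarith
  have hL' : |L| / q < q ^ (-τ - 1) / 4 := by
    rw [Real.rpow_sub_one hq0.ne', div_right_comm, div_lt_div_iff_of_pos_right hq0]
    refine hL.trans_le ?_
    gcongr 1
    exact Real.rpow_le_rpow_of_nonpos hq0 hqQ (neg_nonpos.mpr hτ0)
  calc |R + L / q| ≤ |R| + |L| / q := by
        rw [← abs_of_pos hq0, ← abs_div, abs_of_pos hq0]; exact abs_add_le _ _
    _ < q ^ (-τ - 1) / 4 + q ^ (-τ - 1) / 4 := add_lt_add_of_le_of_lt (hR.trans hR') hL'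
    _ = q ^ (-τ - 1) / 2 := by ring

theorem abs_apply_div_sub_div_lt {ι : Type*} [Fintype ι] [DecidableEq ι] (φ : (ι → ℝ) → ℝ)
    (L : (ι → ℝ) →L[ℝ] ℝ) (x : ι → ℝ) (p : ι → ℤ) (p' : ℤ) {q : ℕ} {Q K δ τ : ℝ}
    (hq : 0 < q) (hqQ : q ≤ Q) (hτ0 : 0 ≤ τ) (hτ1 : τ ≤ 1) (hK : 0 ≤ K)
    (hKδ : K * δ ^ 2 ≤ 1 / 4) (hyx : ‖(fun i => (p i : ℝ) / q) - x‖ ≤ δ / q)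
    (hR : |φ (fun i => (p i : ℝ) / q) - φ x - L ((fun i => (p i : ℝ) / q) - x)|
      ≤ K * ‖(fun i => (p i : ℝ) / q) - x‖ ^ 2)
    (hL : |q * φ x + ∑ i, L (Pi.single i 1) * (p i - q * x i) - p'| < Q ^ (-τ) / 4) :
    |φ (fun i => (p i : ℝ) / q) - p' / q| < (q : ℝ) ^ (-τ - 1) / 2 := by
  set y : ι → ℝ := fun i => (p i : ℝ) / q
  have hq0 : (0 : ℝ) < q := by exact_mod_cast hq
  have hLyx : L (y - x) = (∑ i, L (Pi.single i 1) * (p i - q * x i)) / q := by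
    rw [L.apply_eq_sum_smul_apply_single, Finset.sum_div]
    refine Finset.sum_congr rfl fun i _ => ?_
    simp only [y, Pi.sub_apply, smul_eq_mul]
    field_simp
  have hR' : |φ y - φ x - L (y - x)| ≤ 1 / (4 * q ^ 2) := by
    calc _ ≤ K * (δ / q) ^ 2 := hR.trans (by gcongr)
      _ = K * δ ^ 2 / q ^ 2 := by ring
      _ ≤ 1 / 4 / q ^ 2 := by gcongr
      _ = 1 / (4 * q ^ 2) := by ring
  convert abs_add_div_lt_rpow (by exact_mod_cast hq) hqQ hτ0 hτ1 hR' hL using 2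
  rw [hLyx]
  field_simp
  ring

theorem one_lt_mul_prod_rpow {ι κ : Type*} [Fintype ι] [Nonempty ι] [Fintype κ] (τ : κ → ℝ)
    {Q : ℝ} (hQ : 0 < Q) :
    1 < (Q + 1) * (∏ _i : ι, 4 ^ ((Fintype.card κ : ℝ) / Fintype.card ι) /
      Q ^ ((1 - ∑ j, τ j) / Fintype.card ι)) * ∏ j, Q ^ (-τ j) / 4 := by
  have hι : (Fintype.card ι : ℝ) ≠ 0 := by positivity
  have h4 : ((4 : ℝ) ^ ((Fintype.card κ : ℝ) / Fintype.card ι)) ^ Fintype.card ι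
      = 4 ^ Fintype.card κ := by
    rw [← Real.rpow_natCast, ← Real.rpow_mul (by norm_num), div_mul_cancel₀ _ hι,
      Real.rpow_natCast]
  have hQpow : (Q ^ ((1 - ∑ j, τ j) / Fintype.card ι)) ^ Fintype.card ι = Q * Q ^ (-∑ j, τ j) := by
    rw [← Real.rpow_natCast, ← Real.rpow_mul hQ.le, div_mul_cancel₀ _ hι, sub_eq_add_neg,
      Real.rpow_add hQ, Real.rpow_one]
  have hprod : ∏ j, Q ^ (-τ j) / 4 = Q ^ (-∑ j, τ j) / 4 ^ Fintype.card κ := by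
    rw [Finset.prod_div_distrib, ← Real.rpow_sum_of_pos hQ, Finset.sum_neg_distrib,
      Finset.prod_const, Finset.card_univ]
  rw [Finset.prod_const, Finset.card_univ, div_pow, h4, hQpow, hprod]
  have : 0 < Q ^ (-∑ j, τ j) := Real.rpow_pos_of_pos hQ _
  field_simp
  linarith

theorem exists_rat_approx_of_one_lt_volume {ι κ : Type*} [Fintype ι] [DecidableEq ι]
    [Nonempty ι] [Fintype κ] {U : Set (ι → ℝ)} (hU : IsOpen U) {f : (ι → ℝ) → κ → ℝ}
    (hf : ContDiffOn ℝ 2 f U) {C : ℝ}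
    (hC : ∀ z ∈ U, ∀ i k j,
      |fderiv ℝ (fun w => fderiv ℝ (fun y => f y j) w (Pi.single i 1)) z (Pi.single k 1)| ≤ C)
    {τ : κ → ℝ} (hτ0 : ∀ j, 0 ≤ τ j) (hτ1 : ∀ j, τ j ≤ 1) {x : ι → ℝ} {Q : ℕ} {δ : ℝ}
    (hQ : 1 ≤ Q) (hδ0 : 0 ≤ δ) (hδ1 : δ ≤ 1) (hball : Metric.closedBall x δ ⊆ U)
    (hCδ : Fintype.card ι ^ 2 * C * δ ^ 2 ≤ 1 / 4)
    (hvol : 1 < (Q + 1) * (∏ _i : ι, δ) * ∏ j, (Q : ℝ) ^ (-τ j) / 4) :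
    ∃ (p : ι → ℤ) (p' : κ → ℤ) (q : ℕ), 1 ≤ q ∧ q ≤ Q ∧ (fun i => (p i : ℝ) / q) ∈ U ∧
      (∀ i, |x i - p i / q| < δ / q) ∧
      ∀ j, |f (fun i => (p i : ℝ) / q) j - p' j / q| < (q : ℝ) ^ (-τ j - 1) / 2 := by
  have hw : ∀ j, (Q : ℝ) ^ (-τ j) / 4 ∈ Set.Icc (0 : ℝ) 1 := fun j => by
    have := Real.rpow_le_one_of_one_le_of_nonpos (Nat.one_le_cast.mpr hQ) (neg_nonpos.mpr (hτ0 j))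
    exact ⟨by positivity, by linarith⟩
  obtain ⟨q, p, p', hq, hqQ, hp, hp'⟩ := exists_pos_nat_approx_linearForms x (fun j => f x j)
    (fun j i => fderiv ℝ (fun y => f y j) x (Pi.single i 1)) (Q + 1) (fun _ => δ) _
    (fun _ => ⟨hδ0, hδ1⟩) hw hvol
  have hxy : ∀ i, |x i - p i / q| < δ / q := fun i => abs_sub_div_lt_div hq (hp i)
  have hyx : ‖(fun i => (p i : ℝ) / q) - x‖ ≤ δ / q :=
    (pi_norm_le_iff_of_nonneg (by positivity)).mpr fun i => by
      simpa [abs_sub_comm] using (hxy i).le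
  have hy : (fun i => (p i : ℝ) / q) ∈ Metric.closedBall x δ := by
    rw [Metric.mem_closedBall, dist_eq_norm]
    exact hyx.trans (div_le_self hδ0 (Nat.one_le_cast.mpr hq))
  have hqQ' : q ≤ Q := Nat.lt_succ_iff.mp (by exact_mod_cast hqQ)
  refine ⟨p, p', q, hq, hqQ', hball hy, hxy, fun j => ?_⟩
  obtain ⟨i₀⟩ := ‹Nonempty ι›
  have hC0 : 0 ≤ C := (abs_nonneg _).trans (hC x (hball (Metric.mem_closedBall_self hδ0)) i₀ i₀ j)
  refine abs_apply_div_sub_div_lt (fun z => f z j) (fderiv ℝ (fun y => f y j) x) x p (p' j) hq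
    (by exact_mod_cast hqQ') (hτ0 j) (hτ1 j) (by positivity) hCδ hyx ?_ (hp' j)
  exact (convex_closedBall x δ).abs_sub_sub_fderiv_le hU (contDiffOn_pi.mp hf j) hball
    (fun z hz i k => hC z (hball hz) i k j) (Metric.mem_closedBall_self hδ0) hy

theorem stmt7_general (d m : ℕ) (hd : 0 < d)
    (U : Set (Fin d → ℝ)) (hU : IsOpen U)
    (f : (Fin d → ℝ) → Fin m → ℝ) (hf : ContDiffOn ℝ 2 f U)
    (C : ℝ)
    (hC : ∀ x ∈ U, ∀ (i k : Fin d) (j : Fin m),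
      |fderivWithin ℝ (fun y => fderivWithin ℝ (fun z => f z j) U y (Pi.single i 1))
        U x (Pi.single k 1)| ≤ C)
    (τ : Fin m → ℝ) (hτ : ∀ j, 0 < τ j) (hsum : ∑ j, τ j < 1) :
    ∀ x ∈ U, ∃ Q₀ : ℕ, ∀ Q : ℕ, Q₀ ≤ Q →
      ∃ (p : Fin d → ℤ) (p' : Fin m → ℤ) (q : ℕ), 1 ≤ q ∧ q ≤ Q ∧
        (fun i : Fin d => (p i : ℝ) / q) ∈ U ∧
        (∀ i : Fin d, |x i - (p i : ℝ) / q| <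
          (4 : ℝ) ^ ((m : ℝ) / d) / (q * (Q : ℝ) ^ ((1 - ∑ j, τ j) / d))) ∧
        (∀ j : Fin m, |f (fun i : Fin d => (p i : ℝ) / q) j - (p' j : ℝ) / q| <
          (q : ℝ) ^ (-(τ j) - 1) / 2) := by
  intro x hx
  have : NeZero d := ⟨hd.ne'⟩
  obtain ⟨r, hr, hrU⟩ := Metric.nhds_basis_closedBall.mem_iff.mp (hU.mem_nhds hx)
  set δ : ℕ → ℝ := fun Q => 4 ^ ((m : ℝ) / d) / (Q : ℝ) ^ ((1 - ∑ j, τ j) / d)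
  have hδ : Tendsto δ atTop (𝓝 0) := tendsto_const_nhds.div_atTop <|
    (tendsto_rpow_atTop (div_pos (by linarith) (by positivity))).comp tendsto_natCast_atTop_atTop
  obtain ⟨Q₀, hQ₀⟩ := eventually_atTop.mp <| (eventually_ge_atTop 1).and <|
    (hδ.eventually_lt_const (lt_min one_pos hr)).and <|
    ((hδ.pow 2).const_mul (d ^ 2 * C)).eventually_lt_const
      (by norm_num : (d ^ 2 * C * 0 ^ 2 : ℝ) < 1 / 4)
  refine ⟨Q₀, fun Q hQ => ?_⟩
  obtain ⟨hQ1, hδQ, hCδ⟩ := hQ₀ Q hQ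
  have hC' : ∀ z ∈ U, ∀ i k j,
      |fderiv ℝ (fun w => fderiv ℝ (fun y => f y j) w (Pi.single i 1)) z (Pi.single k 1)| ≤ C :=
    fun z hz i k j => by rw [← hU.fderivWithin_fderivWithin_apply _ _ hz]; exact hC z hz i k j
  obtain ⟨p, p', q, hq, hqQ, hpU, hpx, hpf⟩ := exists_rat_approx_of_one_lt_volume (δ := δ Q) hU hf
    hC' (fun j => (hτ j).le)
    (fun j => (single_le_sum (fun k _ => (hτ k).le) (mem_univ j)).trans hsum.le)
    hQ1 (by positivity) (hδQ.trans_le (min_le_left _ _)).le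
    ((Metric.closedBall_subset_closedBall (hδQ.trans_le (min_le_right _ _)).le).trans hrU)
    (by simpa using hCδ.le)
    (by simpa only [Fintype.card_fin] using
      one_lt_mul_prod_rpow (ι := Fin d) τ (Nat.cast_pos.mpr hQ1))
  exact ⟨p, p', q, hq, hqQ, hpU, fun i => (hpx i).trans_eq (by rw [div_div, mul_comm]), hpf⟩

/-- Dirichlet-style theorem on manifolds (first part): for `f : U → ℝᵐ` of class
`C²` with bounded first and second partial derivatives on the open set
`U ⊆ ℝᵈ`, and weights `τ ∈ ℝ₊ᵐ` with `∑ τⱼ < 1`, every `x ∈ U` admits, for all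
large `Q`, a rational point `(p/q, p'/q)` with `1 ≤ q ≤ Q`,
`|xᵢ - pᵢ/q| < 4^{m/d}/(q Q^{(1-∑τ)/d})` and
`|fⱼ(p/q) - p'_{j}/q| < q^{-τⱼ-1}/2`. -/
theorem stmt7 (d m : ℕ) (hd : 0 < d) (hm : 0 < m)
    (U : Set (Fin d → ℝ)) (hU : IsOpen U)
    (f : (Fin d → ℝ) → Fin m → ℝ) (hf : ContDiffOn ℝ 2 f U)
    (D C : ℝ)
    (hD : ∀ x ∈ U, ∀ (i : Fin d) (j : Fin m),
      |fderivWithin ℝ (fun y => f y j) U x (Pi.single i 1)| ≤ D)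
    (hC : ∀ x ∈ U, ∀ (i k : Fin d) (j : Fin m),
      |fderivWithin ℝ (fun y => fderivWithin ℝ (fun z => f z j) U y (Pi.single i 1))
        U x (Pi.single k 1)| ≤ C)
    (τ : Fin m → ℝ) (hτ : ∀ j, 0 < τ j) (hsum : ∑ j, τ j < 1) :
    ∀ x ∈ U, ∃ Q₀ : ℕ, ∀ Q : ℕ, Q₀ ≤ Q →
      ∃ (p : Fin d → ℤ) (p' : Fin m → ℤ) (q : ℕ), 1 ≤ q ∧ q ≤ Q ∧
        (fun i : Fin d => (p i : ℝ) / q) ∈ U ∧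
        (∀ i : Fin d, |x i - (p i : ℝ) / q| <
          (4 : ℝ) ^ ((m : ℝ) / d) / (q * (Q : ℝ) ^ ((1 - ∑ j, τ j) / d))) ∧
        (∀ j : Fin m, |f (fun i : Fin d => (p i : ℝ) / q) j - (p' j : ℝ) / q| <
          (q : ℝ) ^ (-(τ j) - 1) / 2) :=
  stmt7_general d m hd U hU f hf C hC τ hτ hsum
end

section
/- Let d, m ≥ 1, n = d + m, τ_1 ≥ … ≥ τ_d > 0, τ_{d+1},…,τ_n > 0 with τ̃ := (1/m)Σ_{j=1}^m τ_{d+j} and τ̃m < 1, and suppose τ_d ≥ (1 − τ̃m)/d. Define a_i := d(1+τ_i)/(d + 1 − τ̃m) for 1 ≤ i ≤ d. Then a_1 ≥ … ≥ a_d ≥ 1 and for each 1 ≤ j ≤ d, (d + Σ_{i=j}^d (a_j − a_i))/a_j = (n + 1 + Σ_{i=j}^n (τ_j − τ_i))/(1+τ_j) − m. -/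
open Finset in
/-- Key algebraic computation in the proof of the main theorem: with
`τ̃ m = ∑ σⱼ < 1` and `aᵢ = d(1+τᵢ)/(d+1-τ̃m)`, the weight vector `a` is
antitone with entries `≥ 1` and
`(d + ∑_{i=j}^d (a_j - a_i))/a_j = (n+1+∑_{i=j}^n (τ_j - τ_i))/(1+τ_j) - m`,
where the `τᵢ` for `d < i ≤ n` are the `σⱼ` and `n = d + m`. -/
theorem stmt13 (d m : ℕ) (hd : 0 < d) (hm : 0 < m)
    (τ : Fin d → ℝ) (σ : Fin m → ℝ)
    (hτmono : Antitone τ) (hτpos : ∀ i, 0 < τ i) (hσpos : ∀ j, 0 < σ j)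
    (hsum : ∑ j, σ j < 1)
    (hlow : ∀ i : Fin d, (1 - ∑ j, σ j) / d ≤ τ i)
    (a : Fin d → ℝ)
    (ha : ∀ i, a i = (d : ℝ) * (1 + τ i) / ((d : ℝ) + 1 - ∑ j, σ j)) :
    Antitone a ∧ (∀ i, 1 ≤ a i) ∧
      ∀ j : Fin d,
        ((d : ℝ) + ∑ i ∈ Ici j, (a j - a i)) / a j =
          (((d : ℝ) + (m : ℝ)) + 1 +
              (∑ i ∈ Ici j, (τ j - τ i) + ∑ j' : Fin m, (τ j - σ j'))) /
            (1 + τ j) - m := by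
  have hd1 : (1 : ℝ) ≤ (d : ℝ) := by exact_mod_cast hd
  have hD : 0 < (d : ℝ) + 1 - ∑ j, σ j := by linarith
  have hdpos : (0 : ℝ) < d := by linarith
  refine ⟨?_, ?_, ?_⟩
  · intro i j hij
    rw [ha, ha]
    have := hτmono hij
    gcongr
  · intro i
    rw [ha, le_div_iff₀ hD]
    have h := hlow i
    rw [div_le_iff₀ hdpos] at h
    nlinarith
  · intro j
    have hτj : 0 < 1 + τ j := by linarith [hτpos j]
    have key : ∀ i, a j - a i =
        (d : ℝ) / ((d : ℝ) + 1 - ∑ j, σ j) * (τ j - τ i) := by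
      intro i; rw [ha, ha]; ring
    have hsum1 : ∑ i ∈ Ici j, (a j - a i) =
        (d : ℝ) / ((d : ℝ) + 1 - ∑ j, σ j) * ∑ i ∈ Ici j, (τ j - τ i) := by
      rw [mul_sum]; exact Finset.sum_congr rfl fun i _ => key i
    have hsum2 : ∑ j' : Fin m, (τ j - σ j') = (m : ℝ) * τ j - ∑ j', σ j' := by
      rw [Finset.sum_sub_distrib, Finset.sum_const, Finset.card_univ,
        Fintype.card_fin, nsmul_eq_mul]
    rw [hsum1, hsum2, ha]
    field_simp
    ring
end
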